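/- Let f : ℝ → ℝ be smooth, Δ = f'' + (f')², and g_f the metric on ℝ³ with nonzero components g(∂t,∂t) = e^{2f(x)}, g(∂x,∂y) = 1. Then for every k ≥ 0, the only potentially nonzero entry (up to the usual symmetries) of the k-th covariant derivative ∇ᵏR of the curvature tensor on coordinate frames is ∇ᵏR(∂x,∂t,∂t,∂x; ∂x,...,∂x) = -e^{2f(x)}Δ⁽ᵏ⁾(x), where Δ⁽ᵏ⁾ is the k-th derivative of Δ. -/

import Mathlib

/-- The metric g_f on ℝ³ with coordinates (t,x,y) = (p 0, p 1, p 2). -/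
noncomputable def gf (f : ℝ → ℝ) (p : Fin 3 → ℝ) (i j : Fin 3) : ℝ :=
  if i = 0 ∧ j = 0 then Real.exp (2 * f (p 1))
  else if (i = 1 ∧ j = 2) ∨ (i = 2 ∧ j = 1) then 1 else 0

/-- Christoffel symbols of the Levi-Civita connection of `g`. -/
def IsLeviCivita (g : (Fin 3 → ℝ) → Fin 3 → Fin 3 → ℝ)
    (Γ : (Fin 3 → ℝ) → Fin 3 → Fin 3 → Fin 3 → ℝ) : Prop :=
  (∀ p i j k, Γ p i j k = Γ p j i k) ∧
  (∀ (p : Fin 3 → ℝ) (i j k : Fin 3),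
    fderiv ℝ (fun q => g q j k) p (Pi.single i 1) =
      (∑ l, Γ p i j l * g p l k) + (∑ l, Γ p i k l * g p j l))

/-- The (0,4) Riemann curvature tensor on coordinate frames. -/
noncomputable def Riem (g : (Fin 3 → ℝ) → Fin 3 → Fin 3 → ℝ)
    (Γ : (Fin 3 → ℝ) → Fin 3 → Fin 3 → Fin 3 → ℝ)
    (p : Fin 3 → ℝ) (i j k l : Fin 3) : ℝ :=
  ∑ m, (fderiv ℝ (fun q => Γ q j k m) p (Pi.single i 1)
        - fderiv ℝ (fun q => Γ q i k m) p (Pi.single j 1)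
        + ∑ n, (Γ p j k n * Γ p i n m - Γ p i k n * Γ p j n m)) * g p m l

/-- Covariant derivative of a (0,m)-tensor field given by its components,
with the last slot the direction of differentiation. -/
noncomputable def covDer (Γ : (Fin 3 → ℝ) → Fin 3 → Fin 3 → Fin 3 → ℝ) {m : ℕ}
    (S : (Fin 3 → ℝ) → (Fin m → Fin 3) → ℝ)
    (p : Fin 3 → ℝ) (idx : Fin (m + 1) → Fin 3) : ℝ :=
  fderiv ℝ (fun q => S q (fun a => idx a.castSucc)) p (Pi.single (idx (Fin.last m)) 1)
    - ∑ a : Fin m, ∑ n : Fin 3,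
        Γ p (idx (Fin.last m)) (idx a.castSucc) n *
          S p (Function.update (fun b => idx b.castSucc) a n)

/-- The components of ∇ᵏR, the k-th covariant derivative of the curvature. -/
noncomputable def nablaR (g : (Fin 3 → ℝ) → Fin 3 → Fin 3 → ℝ)
    (Γ : (Fin 3 → ℝ) → Fin 3 → Fin 3 → Fin 3 → ℝ) :
    (k : ℕ) → (Fin 3 → ℝ) → (Fin (4 + k) → Fin 3) → ℝ
  | 0 => fun p idx => Riem g Γ p (idx 0) (idx 1) (idx 2) (idx 3)
  | k + 1 => covDer Γ (nablaR g Γ k)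


/-- sign factor -/
noncomputable def eps (i j : Fin 3) : ℝ :=
  if i = 1 ∧ j = 0 then 1 else if i = 0 ∧ j = 1 then -1 else 0

/-- Christoffel symbols as a function of x -/
noncomputable def gam (f : ℝ → ℝ) (i j l : Fin 3) (x : ℝ) : ℝ :=
  if ((i = 0 ∧ j = 1) ∨ (i = 1 ∧ j = 0)) ∧ l = 0 then deriv f x
  else if i = 0 ∧ j = 0 ∧ l = 2 then -(deriv f x * Real.exp (2 * f x)) else 0

noncomputable def Γ₀ (f : ℝ → ℝ) (p : Fin 3 → ℝ) (i j l : Fin 3) : ℝ := gam f i j l (p 1)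

/-- the coefficient function -/
noncomputable def cc (k : ℕ) (idx : Fin (4 + k) → Fin 3) : ℝ :=
  eps (idx ⟨0, by linarith⟩) (idx ⟨1, by linarith⟩) * eps (idx ⟨3, by linarith⟩) (idx ⟨2, by linarith⟩) *
    ∏ a : Fin k, (if idx (Fin.natAdd 4 a) = 1 then (1:ℝ) else 0)

/-- key fderiv computation -/
lemma key_fderiv (h : ℝ → ℝ) (p : Fin 3 → ℝ) (hd : DifferentiableAt ℝ h (p 1)) (i : Fin 3) :
    fderiv ℝ (fun q : Fin 3 → ℝ => h (q 1)) p (Pi.single i 1) =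
      if i = 1 then deriv h (p 1) else 0 := by
  have h1 : HasFDerivAt (fun q : Fin 3 → ℝ => q 1)
      (ContinuousLinearMap.proj (R := ℝ) (φ := fun _ : Fin 3 => ℝ) 1) p :=
    (ContinuousLinearMap.proj (R := ℝ) (φ := fun _ : Fin 3 => ℝ) 1).hasFDerivAt
  have h2 := (hd.hasDerivAt).comp_hasFDerivAt p h1
  rw [show (fun q : Fin 3 → ℝ => h (q 1)) = h ∘ (fun q : Fin 3 → ℝ => q 1) from rfl,
    h2.fderiv]
  rcases eq_or_ne i 1 with hi | hi
  · simp [hi, Pi.single_apply]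
  · simp [hi, Ne.symm hi, Pi.single_apply]

section
variable {f : ℝ → ℝ}

lemma df_cd (hf : ContDiff ℝ (⊤ : ℕ∞) f) : ContDiff ℝ ((⊤:ℕ∞) : WithTop ℕ∞) (deriv f) := by
  have := (hf.of_le (by simp) : ContDiff ℝ ((⊤:ℕ∞) : WithTop ℕ∞) f).iterate_deriv 1
  rwa [Function.iterate_one] at this

lemma hasDerivAt_E (hf : ContDiff ℝ (⊤ : ℕ∞) f) (x : ℝ) :
    HasDerivAt (fun x => Real.exp (2 * f x)) (Real.exp (2 * f x) * (2 * deriv f x)) x :=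
  (((hf.differentiable (by simp) x).hasDerivAt).const_mul 2).exp

lemma deriv_E (hf : ContDiff ℝ (⊤ : ℕ∞) f) (x : ℝ) :
    deriv (fun x => Real.exp (2 * f x)) x = 2 * deriv f x * Real.exp (2 * f x) := by
  rw [(hasDerivAt_E hf x).deriv]; ring

lemma fderiv_gf (hf : ContDiff ℝ (⊤ : ℕ∞) f) (p : Fin 3 → ℝ) (i j k : Fin 3) :
    fderiv ℝ (fun q => gf f q j k) p (Pi.single i 1) =
      if i = 1 ∧ j = 0 ∧ k = 0 then 2 * deriv f (p 1) * Real.exp (2 * f (p 1)) else 0 := by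
  by_cases hjk : j = 0 ∧ k = 0
  · obtain ⟨hj, hk⟩ := hjk; subst hj; subst hk
    have he : (fun q : Fin 3 → ℝ => gf f q 0 0) = fun q => Real.exp (2 * f (q 1)) := by
      funext q; simp [gf]
    rw [he, key_fderiv _ _ (hasDerivAt_E hf (p 1)).differentiableAt, deriv_E hf]
    by_cases hi : i = 1 <;> simp [hi]
  · have he : (fun q : Fin 3 → ℝ => gf f q j k) =
        fun _ => (if (j = 1 ∧ k = 2) ∨ (j = 2 ∧ k = 1) then (1:ℝ) else 0) := by
      funext q; simp only [gf, if_neg hjk]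
    rw [he, fderiv_fun_const]
    simp only [Pi.zero_apply, ContinuousLinearMap.zero_apply]
    rw [if_neg (by tauto)]

lemma gf_symm (p : Fin 3 → ℝ) (i j : Fin 3) : gf f p i j = gf f p j i := by
  fin_cases i <;> fin_cases j <;> simp [gf]

lemma Gamma_eq (hf : ContDiff ℝ (⊤ : ℕ∞) f) (Γ : (Fin 3 → ℝ) → Fin 3 → Fin 3 → Fin 3 → ℝ)
    (hΓ : IsLeviCivita (gf f) Γ) : Γ = Γ₀ f := by
  obtain ⟨hsym, hcomp⟩ := hΓ
  funext p i j l
  have hEne : Real.exp (2 * f (p 1)) ≠ 0 := Real.exp_ne_zero _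
  have hAA : ∀ i j k : Fin 3,
      (if i = 1 ∧ j = 0 ∧ k = 0 then 2 * deriv f (p 1) * Real.exp (2 * f (p 1)) else 0) =
        (∑ l, Γ p i j l * gf f p l k) + (∑ l, Γ p i k l * gf f p l j) := by
    intro i j k
    rw [← fderiv_gf hf p i j k, hcomp p i j k]
    congr 1
    exact Finset.sum_congr rfl fun l _ => by rw [gf_symm]
  have key : ∀ i j k : Fin 3, (∑ l, Γ p i j l * gf f p l k) =
      ((if i = 1 ∧ j = 0 ∧ k = 0 then 2 * deriv f (p 1) * Real.exp (2 * f (p 1)) else 0)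
       + (if j = 1 ∧ i = 0 ∧ k = 0 then 2 * deriv f (p 1) * Real.exp (2 * f (p 1)) else 0)
       - (if k = 1 ∧ i = 0 ∧ j = 0 then 2 * deriv f (p 1) * Real.exp (2 * f (p 1)) else 0)) / 2 := by
    intro i j k
    have e1 := hAA i j k
    have e2 := hAA j i k
    have e3 := hAA k i j
    have s1 : (∑ l, Γ p i j l * gf f p l k) = ∑ l, Γ p j i l * gf f p l k :=
      Finset.sum_congr rfl fun l _ => by rw [hsym]
    have s2 : (∑ l, Γ p i k l * gf f p l j) = ∑ l, Γ p k i l * gf f p l j :=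
      Finset.sum_congr rfl fun l _ => by rw [hsym]
    have s3 : (∑ l, Γ p j k l * gf f p l i) = ∑ l, Γ p k j l * gf f p l i :=
      Finset.sum_congr rfl fun l _ => by rw [hsym]
    linarith
  show Γ p i j l = gam f i j l (p 1)
  have hk0 := key i j 0
  have hk1 := key i j 1
  have hk2 := key i j 2
  simp only [Fin.sum_univ_three] at hk0 hk1 hk2
  fin_cases i <;> fin_cases j <;> fin_cases l <;>
    simp [gf, gam] at hk0 hk1 hk2 ⊢ <;>
    first
      | linarith
      | (exact mul_right_cancel₀ hEne (by linarith))

end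

noncomputable def dgam (f : ℝ → ℝ) (i j l : Fin 3) (x : ℝ) : ℝ :=
  if ((i = 0 ∧ j = 1) ∨ (i = 1 ∧ j = 0)) ∧ l = 0 then deriv (deriv f) x
  else if i = 0 ∧ j = 0 ∧ l = 2 then
    -((deriv (deriv f) x + 2 * (deriv f x) ^ 2) * Real.exp (2 * f x)) else 0

section
variable {f : ℝ → ℝ}

lemma hasDerivAt_gam (hf : ContDiff ℝ (⊤ : ℕ∞) f) (i j l : Fin 3) (x : ℝ) :
    HasDerivAt (gam f i j l) (dgam f i j l x) x := by
  unfold gam dgam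
  split_ifs with h1 h2
  · exact ((df_cd hf).differentiable (by simp) x).hasDerivAt
  · have hm : HasDerivAt (fun x => deriv f x * Real.exp (2 * f x))
        (deriv (deriv f) x * Real.exp (2 * f x)
          + deriv f x * (Real.exp (2 * f x) * (2 * deriv f x))) x :=
      (((df_cd hf).differentiable (by simp) x).hasDerivAt).mul
        (hasDerivAt_E hf x)
    have := hm.neg
    exact this.congr_deriv (by ring)
  · exact hasDerivAt_const x 0

lemma fderiv_Γ₀ (hf : ContDiff ℝ (⊤ : ℕ∞) f) (p : Fin 3 → ℝ) (i j k m : Fin 3) :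
    fderiv ℝ (fun q => Γ₀ f q j k m) p (Pi.single i 1) =
      if i = 1 then dgam f j k m (p 1) else 0 := by
  rw [show (fun q => Γ₀ f q j k m) = fun q : Fin 3 → ℝ => gam f j k m (q 1) from rfl,
    key_fderiv _ _ (hasDerivAt_gam hf j k m (p 1)).differentiableAt,
    (hasDerivAt_gam hf j k m (p 1)).deriv]


end
section
variable {f : ℝ → ℝ} {x : ℝ} {p : Fin 3 → ℝ}
@[simp] lemma gamv_000 : gam f 0 0 0 x = (0:ℝ) := by simp [gam]
@[simp] lemma dgamv_000 : dgam f 0 0 0 x = (0:ℝ) := by simp [dgam]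
@[simp] lemma gamv_001 : gam f 0 0 1 x = (0:ℝ) := by simp [gam]
@[simp] lemma dgamv_001 : dgam f 0 0 1 x = (0:ℝ) := by simp [dgam]
@[simp] lemma gamv_002 : gam f 0 0 2 x = -(deriv f x * Real.exp (2 * f x)) := by simp [gam]
@[simp] lemma dgamv_002 : dgam f 0 0 2 x = -((deriv (deriv f) x + 2 * (deriv f x) ^ 2) * Real.exp (2 * f x)) := by simp [dgam]
@[simp] lemma gamv_010 : gam f 0 1 0 x = deriv f x := by simp [gam]
@[simp] lemma dgamv_010 : dgam f 0 1 0 x = deriv (deriv f) x := by simp [dgam]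
@[simp] lemma gamv_011 : gam f 0 1 1 x = (0:ℝ) := by simp [gam]
@[simp] lemma dgamv_011 : dgam f 0 1 1 x = (0:ℝ) := by simp [dgam]
@[simp] lemma gamv_012 : gam f 0 1 2 x = (0:ℝ) := by simp [gam]
@[simp] lemma dgamv_012 : dgam f 0 1 2 x = (0:ℝ) := by simp [dgam]
@[simp] lemma gamv_020 : gam f 0 2 0 x = (0:ℝ) := by simp [gam]
@[simp] lemma dgamv_020 : dgam f 0 2 0 x = (0:ℝ) := by simp [dgam]
@[simp] lemma gamv_021 : gam f 0 2 1 x = (0:ℝ) := by simp [gam]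
@[simp] lemma dgamv_021 : dgam f 0 2 1 x = (0:ℝ) := by simp [dgam]
@[simp] lemma gamv_022 : gam f 0 2 2 x = (0:ℝ) := by simp [gam]
@[simp] lemma dgamv_022 : dgam f 0 2 2 x = (0:ℝ) := by simp [dgam]
@[simp] lemma gamv_100 : gam f 1 0 0 x = deriv f x := by simp [gam]
@[simp] lemma dgamv_100 : dgam f 1 0 0 x = deriv (deriv f) x := by simp [dgam]
@[simp] lemma gamv_101 : gam f 1 0 1 x = (0:ℝ) := by simp [gam]
@[simp] lemma dgamv_101 : dgam f 1 0 1 x = (0:ℝ) := by simp [dgam]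
@[simp] lemma gamv_102 : gam f 1 0 2 x = (0:ℝ) := by simp [gam]
@[simp] lemma dgamv_102 : dgam f 1 0 2 x = (0:ℝ) := by simp [dgam]
@[simp] lemma gamv_110 : gam f 1 1 0 x = (0:ℝ) := by simp [gam]
@[simp] lemma dgamv_110 : dgam f 1 1 0 x = (0:ℝ) := by simp [dgam]
@[simp] lemma gamv_111 : gam f 1 1 1 x = (0:ℝ) := by simp [gam]
@[simp] lemma dgamv_111 : dgam f 1 1 1 x = (0:ℝ) := by simp [dgam]
@[simp] lemma gamv_112 : gam f 1 1 2 x = (0:ℝ) := by simp [gam]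
@[simp] lemma dgamv_112 : dgam f 1 1 2 x = (0:ℝ) := by simp [dgam]
@[simp] lemma gamv_120 : gam f 1 2 0 x = (0:ℝ) := by simp [gam]
@[simp] lemma dgamv_120 : dgam f 1 2 0 x = (0:ℝ) := by simp [dgam]
@[simp] lemma gamv_121 : gam f 1 2 1 x = (0:ℝ) := by simp [gam]
@[simp] lemma dgamv_121 : dgam f 1 2 1 x = (0:ℝ) := by simp [dgam]
@[simp] lemma gamv_122 : gam f 1 2 2 x = (0:ℝ) := by simp [gam]
@[simp] lemma dgamv_122 : dgam f 1 2 2 x = (0:ℝ) := by simp [dgam]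
@[simp] lemma gamv_200 : gam f 2 0 0 x = (0:ℝ) := by simp [gam]
@[simp] lemma dgamv_200 : dgam f 2 0 0 x = (0:ℝ) := by simp [dgam]
@[simp] lemma gamv_201 : gam f 2 0 1 x = (0:ℝ) := by simp [gam]
@[simp] lemma dgamv_201 : dgam f 2 0 1 x = (0:ℝ) := by simp [dgam]
@[simp] lemma gamv_202 : gam f 2 0 2 x = (0:ℝ) := by simp [gam]
@[simp] lemma dgamv_202 : dgam f 2 0 2 x = (0:ℝ) := by simp [dgam]
@[simp] lemma gamv_210 : gam f 2 1 0 x = (0:ℝ) := by simp [gam]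
@[simp] lemma dgamv_210 : dgam f 2 1 0 x = (0:ℝ) := by simp [dgam]
@[simp] lemma gamv_211 : gam f 2 1 1 x = (0:ℝ) := by simp [gam]
@[simp] lemma dgamv_211 : dgam f 2 1 1 x = (0:ℝ) := by simp [dgam]
@[simp] lemma gamv_212 : gam f 2 1 2 x = (0:ℝ) := by simp [gam]
@[simp] lemma dgamv_212 : dgam f 2 1 2 x = (0:ℝ) := by simp [dgam]
@[simp] lemma gamv_220 : gam f 2 2 0 x = (0:ℝ) := by simp [gam]
@[simp] lemma dgamv_220 : dgam f 2 2 0 x = (0:ℝ) := by simp [dgam]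
@[simp] lemma gamv_221 : gam f 2 2 1 x = (0:ℝ) := by simp [gam]
@[simp] lemma dgamv_221 : dgam f 2 2 1 x = (0:ℝ) := by simp [dgam]
@[simp] lemma gamv_222 : gam f 2 2 2 x = (0:ℝ) := by simp [gam]
@[simp] lemma dgamv_222 : dgam f 2 2 2 x = (0:ℝ) := by simp [dgam]
@[simp] lemma gfv_00 : gf f p 0 0 = Real.exp (2 * f (p 1)) := by simp [gf]
@[simp] lemma epsv_00 : eps 0 0 = (0:ℝ) := by simp [eps]
@[simp] lemma gfv_01 : gf f p 0 1 = (0:ℝ) := by simp [gf]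
@[simp] lemma epsv_01 : eps 0 1 = (-1:ℝ) := by simp [eps]
@[simp] lemma gfv_02 : gf f p 0 2 = (0:ℝ) := by simp [gf]
@[simp] lemma epsv_02 : eps 0 2 = (0:ℝ) := by simp [eps]
@[simp] lemma gfv_10 : gf f p 1 0 = (0:ℝ) := by simp [gf]
@[simp] lemma epsv_10 : eps 1 0 = (1:ℝ) := by simp [eps]
@[simp] lemma gfv_11 : gf f p 1 1 = (0:ℝ) := by simp [gf]
@[simp] lemma epsv_11 : eps 1 1 = (0:ℝ) := by simp [eps]
@[simp] lemma gfv_12 : gf f p 1 2 = (1:ℝ) := by simp [gf]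
@[simp] lemma epsv_12 : eps 1 2 = (0:ℝ) := by simp [eps]
@[simp] lemma gfv_20 : gf f p 2 0 = (0:ℝ) := by simp [gf]
@[simp] lemma epsv_20 : eps 2 0 = (0:ℝ) := by simp [eps]
@[simp] lemma gfv_21 : gf f p 2 1 = (1:ℝ) := by simp [gf]
@[simp] lemma epsv_21 : eps 2 1 = (0:ℝ) := by simp [eps]
@[simp] lemma gfv_22 : gf f p 2 2 = (0:ℝ) := by simp [gf]
@[simp] lemma epsv_22 : eps 2 2 = (0:ℝ) := by simp [eps]
end


@[simp] lemma fin3_mk0 (h : 0 < 3) : (⟨0, h⟩ : Fin 3) = 0 := rfl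
@[simp] lemma fin3_mk1 (h : 1 < 3) : (⟨1, h⟩ : Fin 3) = 1 := rfl
@[simp] lemma fin3_mk2 (h : 2 < 3) : (⟨2, h⟩ : Fin 3) = 2 := rfl

set_option maxHeartbeats 1000000 in
lemma riem_eq {f : ℝ → ℝ} (hf : ContDiff ℝ (⊤ : ℕ∞) f) (Δ : ℝ → ℝ)
    (hΔ : ∀ x, Δ x = deriv (deriv f) x + (deriv f x) ^ 2)
    (p : Fin 3 → ℝ) (i j k l : Fin 3) :
    Riem (gf f) (Γ₀ f) p i j k l =
      eps i j * eps l k * (-(Real.exp (2 * f (p 1)) * Δ (p 1))) := by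
  rw [hΔ]
  unfold Riem
  fin_cases i <;> fin_cases j <;> fin_cases k <;> fin_cases l <;>
    (simp only [fderiv_Γ₀ hf]; simp [Fin.sum_univ_three, Γ₀]) <;> ring_nf

lemma eps_ne {i j : Fin 3} (h : eps i j ≠ 0) : (i = 1 ∧ j = 0) ∨ (i = 0 ∧ j = 1) := by
  fin_cases i <;> fin_cases j <;> simp_all

lemma eps_left2 (j : Fin 3) : eps 2 j = 0 := by fin_cases j <;> simp
lemma eps_right2 (i : Fin 3) : eps i 2 = 0 := by fin_cases i <;> simp

lemma cc_tail {k : ℕ} (idx : Fin (4 + k) → Fin 3) (b : Fin k)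
    (h : idx (Fin.natAdd 4 b) ≠ 1) : cc k idx = 0 := by
  unfold cc
  rw [Finset.prod_eq_zero (Finset.mem_univ b) (by rw [if_neg h]), mul_zero]

lemma cc_two {k : ℕ} (idx : Fin (4 + k) → Fin 3) (a : Fin (4 + k))
    (h : idx a = 2) : cc k idx = 0 := by
  rcases lt_or_ge (a : ℕ) 4 with h4 | h4
  · have : a = ⟨0, by linarith⟩ ∨ a = ⟨1, by linarith⟩ ∨ a = ⟨2, by linarith⟩ ∨ a = ⟨3, by linarith⟩ := by
      rcases a with ⟨av, ha⟩
      interval_cases av <;> simp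
    unfold cc
    rcases this with h0 | h1 | h2 | h3
    · rw [← h0, h, eps_left2, zero_mul, zero_mul]
    · rw [← h1, h, eps_right2, zero_mul, zero_mul]
    · rw [← h2, h, eps_right2, mul_zero, zero_mul]
    · rw [← h3, h, eps_left2, mul_zero, zero_mul]
  · have hb : a = Fin.natAdd 4 ⟨(a : ℕ) - 4, by omega⟩ := by
      ext; simp [Fin.natAdd]; omega
    exact cc_tail idx _ (by rw [← hb, h]; decide)

set_option maxHeartbeats 1000000 in
lemma cc_count {k : ℕ} (J : Fin (4 + k) → Fin 3) :
    (∑ a, if J a = 0 then (1:ℝ) else 0) * cc k J = 2 * cc k J := by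
  by_cases hc : cc k J = 0
  · rw [hc, mul_zero, mul_zero]
  · unfold cc at hc
    have h1 : eps (J ⟨0, by linarith⟩) (J ⟨1, by linarith⟩) ≠ 0 := fun h => hc (by rw [h]; ring)
    have h2 : eps (J ⟨3, by linarith⟩) (J ⟨2, by linarith⟩) ≠ 0 := fun h => hc (by rw [h]; ring)
    have h3 : ∀ b : Fin k, J (Fin.natAdd 4 b) = 1 := by
      intro b
      by_contra hb
      exact hc (by rw [Finset.prod_eq_zero (Finset.mem_univ b) (by rw [if_neg hb]), mul_zero])
    have hsum : (∑ a, if J a = 0 then (1:ℝ) else 0) = 2 := by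
      rw [Fin.sum_univ_add]
      have e2 : (∑ b : Fin k, if J (Fin.natAdd 4 b) = 0 then (1:ℝ) else 0) = 0 :=
        Finset.sum_eq_zero fun b _ => by rw [if_neg (by rw [h3 b]; decide)]
      rw [e2, add_zero, Fin.sum_univ_four]
      show (if J ⟨0, by linarith⟩ = 0 then (1:ℝ) else 0) + (if J ⟨1, by linarith⟩ = 0 then (1:ℝ) else 0)
          + (if J ⟨2, by linarith⟩ = 0 then (1:ℝ) else 0) + (if J ⟨3, by linarith⟩ = 0 then (1:ℝ) else 0) = 2
      rcases eps_ne h1 with ⟨ha, hb⟩ | ⟨ha, hb⟩ <;> rcases eps_ne h2 with ⟨hc', hd⟩ | ⟨hc', hd⟩ <;>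
        rw [ha, hb, hc', hd] <;> norm_num
    rw [hsum]

lemma cc_upd0 {k : ℕ} (J : Fin (4 + k) → Fin 3) (c : Fin 3) :
    cc k (Function.update J ⟨0, by linarith⟩ c) =
      eps c (J ⟨1, by linarith⟩) * eps (J ⟨3, by linarith⟩) (J ⟨2, by linarith⟩) *
        ∏ a : Fin k, (if J (Fin.natAdd 4 a) = 1 then (1:ℝ) else 0) := by
  unfold cc
  rw [Function.update_self,
    Function.update_of_ne (by simp [Fin.ext_iff]),
    Function.update_of_ne (by simp [Fin.ext_iff]),
    Function.update_of_ne (by simp [Fin.ext_iff])]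
  congr 1
  exact Finset.prod_congr rfl fun b _ => by
    rw [Function.update_of_ne (by simp [Fin.ext_iff] <;> omega)]

lemma cc_upd1 {k : ℕ} (J : Fin (4 + k) → Fin 3) (c : Fin 3) :
    cc k (Function.update J ⟨1, by linarith⟩ c) =
      eps (J ⟨0, by linarith⟩) c * eps (J ⟨3, by linarith⟩) (J ⟨2, by linarith⟩) *
        ∏ a : Fin k, (if J (Fin.natAdd 4 a) = 1 then (1:ℝ) else 0) := by
  unfold cc
  rw [Function.update_self,
    Function.update_of_ne (by simp [Fin.ext_iff]),
    Function.update_of_ne (by simp [Fin.ext_iff]),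
    Function.update_of_ne (by simp [Fin.ext_iff])]
  congr 1
  exact Finset.prod_congr rfl fun b _ => by
    rw [Function.update_of_ne (by simp [Fin.ext_iff] <;> omega)]

lemma cc_upd2 {k : ℕ} (J : Fin (4 + k) → Fin 3) (c : Fin 3) :
    cc k (Function.update J ⟨2, by linarith⟩ c) =
      eps (J ⟨0, by linarith⟩) (J ⟨1, by linarith⟩) * eps (J ⟨3, by linarith⟩) c *
        ∏ a : Fin k, (if J (Fin.natAdd 4 a) = 1 then (1:ℝ) else 0) := by
  unfold cc
  rw [Function.update_self,
    Function.update_of_ne (by simp [Fin.ext_iff]),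
    Function.update_of_ne (by simp [Fin.ext_iff]),
    Function.update_of_ne (by simp [Fin.ext_iff])]
  congr 1
  exact Finset.prod_congr rfl fun b _ => by
    rw [Function.update_of_ne (by simp [Fin.ext_iff] <;> omega)]

lemma cc_upd3 {k : ℕ} (J : Fin (4 + k) → Fin 3) (c : Fin 3) :
    cc k (Function.update J ⟨3, by linarith⟩ c) =
      eps (J ⟨0, by linarith⟩) (J ⟨1, by linarith⟩) * eps c (J ⟨2, by linarith⟩) *
        ∏ a : Fin k, (if J (Fin.natAdd 4 a) = 1 then (1:ℝ) else 0) := by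
  unfold cc
  rw [Function.update_self,
    Function.update_of_ne (by simp [Fin.ext_iff]),
    Function.update_of_ne (by simp [Fin.ext_iff]),
    Function.update_of_ne (by simp [Fin.ext_iff])]
  congr 1
  exact Finset.prod_congr rfl fun b _ => by
    rw [Function.update_of_ne (by simp [Fin.ext_iff] <;> omega)]

set_option maxHeartbeats 1000000 in
lemma cc_pair {k : ℕ} (J : Fin (4 + k) → Fin 3) :
    ∑ a, (if J a = 1 then (1:ℝ) else 0) * cc k (Function.update J a 0) = 0 := by
  rw [Fin.sum_univ_add]
  have e2 : (∑ b : Fin k,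
      (if J (Fin.natAdd 4 b) = 1 then (1:ℝ) else 0) *
        cc k (Function.update J (Fin.natAdd 4 b) 0)) = 0 :=
    Finset.sum_eq_zero fun b _ => by
      rw [cc_tail (Function.update J (Fin.natAdd 4 b) 0) b
        (by rw [Function.update_self]; decide), mul_zero]
  rw [e2, add_zero, Fin.sum_univ_four]
  show (if J ⟨0, by linarith⟩ = 1 then (1:ℝ) else 0) * cc k (Function.update J ⟨0, by linarith⟩ 0)
      + (if J ⟨1, by linarith⟩ = 1 then (1:ℝ) else 0) * cc k (Function.update J ⟨1, by linarith⟩ 0)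
      + (if J ⟨2, by linarith⟩ = 1 then (1:ℝ) else 0) * cc k (Function.update J ⟨2, by linarith⟩ 0)
      + (if J ⟨3, by linarith⟩ = 1 then (1:ℝ) else 0) * cc k (Function.update J ⟨3, by linarith⟩ 0) = 0
  rw [cc_upd0, cc_upd1, cc_upd2, cc_upd3]
  set P := ∏ a : Fin k, (if J (Fin.natAdd 4 a) = 1 then (1:ℝ) else 0)
  generalize J ⟨0, by linarith⟩ = x0
  generalize J ⟨1, by linarith⟩ = x1
  generalize J ⟨2, by linarith⟩ = x2
  generalize J ⟨3, by linarith⟩ = x3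
  fin_cases x0 <;> fin_cases x1 <;> fin_cases x2 <;> fin_cases x3 <;> norm_num <;> (first | ring1 | simp)

lemma cc_succ (k : ℕ) (idx : Fin (4 + (k + 1)) → Fin 3) :
    cc (k + 1) idx = cc k (fun a => idx a.castSucc) *
      (if idx (Fin.last (4 + k)) = 1 then 1 else 0) := by
  unfold cc
  rw [Fin.prod_univ_castSucc]
  show _ * _ * ((∏ a : Fin k, _) * _) = _
  ring_nf
  rfl

section
variable {f : ℝ → ℝ}

lemma gam_d2 (j n : Fin 3) (x : ℝ) : gam f 2 j n x = 0 := by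
  fin_cases j <;> fin_cases n <;> simp

lemma gam_d1 (j n : Fin 3) (x : ℝ) :
    gam f 1 j n x = if j = 0 ∧ n = 0 then deriv f x else 0 := by
  fin_cases j <;> fin_cases n <;> simp

lemma gam_d0 (j n : Fin 3) (x : ℝ) :
    gam f 0 j n x = if j = 1 ∧ n = 0 then deriv f x
      else if j = 0 ∧ n = 2 then -(deriv f x * Real.exp (2 * f x)) else 0 := by
  fin_cases j <;> fin_cases n <;> simp

lemma main_lemma (hf : ContDiff ℝ (⊤ : ℕ∞) f) (Δ : ℝ → ℝ)
    (hΔ : ∀ x, Δ x = deriv (deriv f) x + (deriv f x) ^ 2) :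
    ∀ (k : ℕ) (p : Fin 3 → ℝ) (idx : Fin (4 + k) → Fin 3),
      nablaR (gf f) (Γ₀ f) k p idx =
        cc k idx * (-(Real.exp (2 * f (p 1)) * deriv^[k] Δ (p 1))) := by
  have hΔc : ContDiff ℝ ((⊤:ℕ∞) : WithTop ℕ∞) Δ := by
    have h2 : Δ = fun x => deriv^[2] f x + (deriv^[1] f x) ^ 2 := by
      funext x; rw [hΔ]; rfl
    rw [h2]
    exact ((hf.of_le (by simp)).iterate_deriv 2).add (((hf.of_le (by simp)).iterate_deriv 1).pow 2)
  intro k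
  induction k with
  | zero =>
    intro p idx
    show Riem (gf f) (Γ₀ f) p (idx 0) (idx 1) (idx 2) (idx 3) = _
    rw [riem_eq hf Δ hΔ]
    unfold cc
    rw [show (⟨0, by linarith⟩ : Fin (4 + 0)) = 0 from rfl,
      show (⟨1, by linarith⟩ : Fin (4 + 0)) = 1 from rfl,
      show (⟨2, by linarith⟩ : Fin (4 + 0)) = 2 from rfl,
      show (⟨3, by linarith⟩ : Fin (4 + 0)) = 3 from rfl]
    simp
  | succ k ih =>
    intro p idx
    show covDer (Γ₀ f) (nablaR (gf f) (Γ₀ f) k) p idx = _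
    rw [cc_succ]
    unfold covDer
    simp only [ih]
    have hD : HasDerivAt (fun x : ℝ =>
        cc k (fun a : Fin (4 + k) => idx a.castSucc) * -(Real.exp (2 * f x) * deriv^[k] Δ x))
        (cc k (fun a : Fin (4 + k) => idx a.castSucc) * -(Real.exp (2 * f (p 1)) *
          (2 * deriv f (p 1) * deriv^[k] Δ (p 1) + deriv^[k + 1] Δ (p 1)))) (p 1) := by
      have h1 : HasDerivAt (deriv^[k] Δ) (deriv^[k + 1] Δ (p 1)) (p 1) := by
        rw [show deriv^[k + 1] Δ = deriv (deriv^[k] Δ) from Function.iterate_succ_apply' deriv k Δ]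
        exact ((hΔc.iterate_deriv k).differentiable (by simp) (p 1)).hasDerivAt
      have h3 := (((hasDerivAt_E hf (p 1)).mul h1).neg).const_mul
        (cc k (fun a : Fin (4 + k) => idx a.castSucc))
      exact h3.congr_deriv (by ring)
    rw [key_fderiv _ p hD.differentiableAt, hD.deriv]
    simp only [Γ₀]
    have hz2 : ∀ (a : Fin (4 + k)) (c : Fin 3),
        cc k (Function.update (fun b : Fin (4 + k) => idx b.castSucc) a 2) = 0 :=
      fun a _ => cc_two _ a (Function.update_self _ _ _)
    generalize idx (Fin.last (4 + k)) = d
    obtain ⟨dv, hdv⟩ := d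
    interval_cases dv <;> simp only [fin3_mk0, fin3_mk1, fin3_mk2]
    · -- d = 0
      have hsum : (∑ a : Fin (4 + k), ∑ n : Fin 3, gam f 0 (idx a.castSucc) n (p 1) *
            (cc k (Function.update (fun b : Fin (4 + k) => idx b.castSucc) a n) *
              -(Real.exp (2 * f (p 1)) * deriv^[k] Δ (p 1)))) =
          (∑ a : Fin (4 + k), (if idx a.castSucc = 1 then (1:ℝ) else 0) *
            cc k (Function.update (fun b : Fin (4 + k) => idx b.castSucc) a 0)) *
            (deriv f (p 1) * -(Real.exp (2 * f (p 1)) * deriv^[k] Δ (p 1))) := by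
        rw [Finset.sum_mul]
        refine Finset.sum_congr rfl fun a _ => ?_
        rw [Fin.sum_univ_three, gam_d0, gam_d0, gam_d0, hz2 a 2]
        by_cases h1 : idx a.castSucc = 1 <;> by_cases h0 : idx a.castSucc = 0 <;>
          simp [h1, h0] <;> ring
      rw [hsum]
      have hp : (∑ a : Fin (4 + k), (if idx a.castSucc = 1 then (1:ℝ) else 0) *
          cc k (Function.update (fun b : Fin (4 + k) => idx b.castSucc) a 0)) = 0 :=
        cc_pair (fun b : Fin (4 + k) => idx b.castSucc)
      rw [hp, zero_mul]
      norm_num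
    · -- d = 1
      have hsum : (∑ a : Fin (4 + k), ∑ n : Fin 3, gam f 1 (idx a.castSucc) n (p 1) *
            (cc k (Function.update (fun b : Fin (4 + k) => idx b.castSucc) a n) *
              -(Real.exp (2 * f (p 1)) * deriv^[k] Δ (p 1)))) =
          ((∑ a : Fin (4 + k), if idx a.castSucc = 0 then (1:ℝ) else 0) *
            cc k (fun b : Fin (4 + k) => idx b.castSucc)) *
            (deriv f (p 1) * -(Real.exp (2 * f (p 1)) * deriv^[k] Δ (p 1))) := by
        rw [Finset.sum_mul, Finset.sum_mul]
        refine Finset.sum_congr rfl fun a _ => ?_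
        rw [Fin.sum_univ_three, gam_d1, gam_d1, gam_d1]
        by_cases h0 : idx a.castSucc = 0
        · have hu : Function.update (fun b : Fin (4 + k) => idx b.castSucc) a (0 : Fin 3)
              = fun b : Fin (4 + k) => idx b.castSucc := by
            rw [← h0, Function.update_eq_self]
          simp [h0, hu]
          ring
        · simp [h0]
      rw [hsum, cc_count (fun b : Fin (4 + k) => idx b.castSucc)]
      rw [show deriv^[k + 1] Δ (p 1) = deriv (deriv^[k] Δ) (p 1) from
        congrFun (Function.iterate_succ_apply' deriv k Δ) (p 1)]
      norm_num
      ring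
    · -- d = 2
      have hsum : (∑ a : Fin (4 + k), ∑ n : Fin 3, gam f 2 (idx a.castSucc) n (p 1) *
            (cc k (Function.update (fun b : Fin (4 + k) => idx b.castSucc) a n) *
              -(Real.exp (2 * f (p 1)) * deriv^[k] Δ (p 1)))) = 0 :=
        Finset.sum_eq_zero fun a _ => Finset.sum_eq_zero fun n _ => by rw [gam_d2, zero_mul]
      rw [hsum, if_neg (show ¬((2:Fin 3) = 1) by decide), if_neg (show ¬((2:Fin 3) = 1) by decide)]
      norm_num

end


/-- for every k, the only potentially nonzero entry of ∇ᵏR for g_f,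
up to the usual symmetries, is ∇ᵏR(∂x,∂t,∂t,∂x;∂x,…,∂x) = -e^(2f)·Δ⁽ᵏ⁾. -/
theorem stmt6 (f : ℝ → ℝ) (hf : ContDiff ℝ (⊤ : ℕ∞) f)
    (Δ : ℝ → ℝ) (hΔ : ∀ x, Δ x = deriv (deriv f) x + (deriv f x) ^ 2)
    (Γ : (Fin 3 → ℝ) → Fin 3 → Fin 3 → Fin 3 → ℝ)
    (hΓ : IsLeviCivita (gf f) Γ) :
    ∀ (k : ℕ) (p : Fin 3 → ℝ),
      nablaR (gf f) Γ k p (fun a => if (a : ℕ) = 1 ∨ (a : ℕ) = 2 then 0 else 1) =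
        -(Real.exp (2 * f (p 1)) * deriv^[k] Δ (p 1)) ∧
      ∀ idx : Fin (4 + k) → Fin 3,
        ¬(((idx ⟨0, by omega⟩ = 1 ∧ idx ⟨1, by omega⟩ = 0 ∧
              idx ⟨2, by omega⟩ = 0 ∧ idx ⟨3, by omega⟩ = 1) ∨
           (idx ⟨0, by omega⟩ = 0 ∧ idx ⟨1, by omega⟩ = 1 ∧
              idx ⟨2, by omega⟩ = 1 ∧ idx ⟨3, by omega⟩ = 0) ∨
           (idx ⟨0, by omega⟩ = 1 ∧ idx ⟨1, by omega⟩ = 0 ∧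
              idx ⟨2, by omega⟩ = 1 ∧ idx ⟨3, by omega⟩ = 0) ∨
           (idx ⟨0, by omega⟩ = 0 ∧ idx ⟨1, by omega⟩ = 1 ∧
              idx ⟨2, by omega⟩ = 0 ∧ idx ⟨3, by omega⟩ = 1)) ∧
          (∀ a : Fin (4 + k), 4 ≤ (a : ℕ) → idx a = 1)) →
        nablaR (gf f) Γ k p idx = 0 := by
  have hΓe : Γ = Γ₀ f := Gamma_eq hf Γ hΓ
  subst hΓe
  intro k p
  constructor
  · rw [main_lemma hf Δ hΔ k p _]
    have h1 : cc k (fun a : Fin (4 + k) => if (a : ℕ) = 1 ∨ (a : ℕ) = 2 then 0 else 1) = 1 := by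
      unfold cc
      have hp : ∀ a : Fin k,
          ((fun a : Fin (4 + k) => if (a : ℕ) = 1 ∨ (a : ℕ) = 2 then (0 : Fin 3) else 1)
            (Fin.natAdd 4 a)) = 1 := fun a => by
        show (if ((Fin.natAdd 4 a : Fin (4+k)) : ℕ) = 1 ∨ ((Fin.natAdd 4 a : Fin (4+k)) : ℕ) = 2
          then (0 : Fin 3) else 1) = 1
        rw [if_neg (by simp [Fin.natAdd]; omega)]
      rw [Finset.prod_congr rfl (fun a _ => by rw [hp a, if_pos rfl]), Finset.prod_const_one]
      norm_num
    rw [h1, one_mul]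
  · intro idx hn
    rw [main_lemma hf Δ hΔ k p idx]
    suffices h : cc k idx = 0 by rw [h, zero_mul]
    by_contra hcc
    apply hn
    unfold cc at hcc
    have h1 : eps (idx ⟨0, by omega⟩) (idx ⟨1, by omega⟩) ≠ 0 := fun h => hcc (by rw [h]; ring)
    have h2 : eps (idx ⟨3, by omega⟩) (idx ⟨2, by omega⟩) ≠ 0 := fun h => hcc (by rw [h]; ring)
    have h3 : ∀ b : Fin k, idx (Fin.natAdd 4 b) = 1 := by
      intro b
      by_contra hb
      exact hcc (by rw [Finset.prod_eq_zero (Finset.mem_univ b) (by rw [if_neg hb]), mul_zero])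
    constructor
    · rcases eps_ne h1 with ⟨a1, a2⟩ | ⟨a1, a2⟩ <;> rcases eps_ne h2 with ⟨a3, a4⟩ | ⟨a3, a4⟩
      · exact Or.inl ⟨a1, a2, a4, a3⟩
      · exact Or.inr (Or.inr (Or.inl ⟨a1, a2, a4, a3⟩))
      · exact Or.inr (Or.inr (Or.inr ⟨a1, a2, a4, a3⟩))
      · exact Or.inr (Or.inl ⟨a1, a2, a4, a3⟩)
    · intro a ha
      have he : a = Fin.natAdd 4 ⟨(a : ℕ) - 4, by have := a.isLt; omega⟩ := by
        ext; simp [Fin.natAdd]; omega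
      rw [he]
      exact h3 _
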